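/- arXiv:2205.00459 — 11 statements merged into one kernel-verified Lean document; each statement's English description precedes it below -/
import Mathlib

section
/- For every N ≥ 1, the scaled weighted firing rate of the LIF neuron satisfies â[N] = ((1−λ)/Δt)·Î[N] − ((1−λ)/(Δt·(1−λ^N)))·V[N]. -/
/-! Unrolling the reset recurrence `V[n] = λ V[n-1] + ((1-λ) I[n] - V_th s[n])` from `V[0] = 0`
expresses `V[N]` as the `λ`-discounted sum of `(1-λ) I - V_th s`, i.e.
`V_th ∑ λ^{N-n} s[n] = (1-λ) ∑ λ^{N-n} I[n] - V[N]`. Dividing by `Δt ∑ λ^{N-n}` and using the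
geometric sum `(1-λ) ∑ λ^{N-n} = 1 - λ^N` gives the formula. -/

open Finset

section DiscountedSum

variable {R : Type*}

theorem sum_Icc_pow_sub_mul_succ [CommSemiring R] (a : R) (f : ℕ → R) (N : ℕ) :
    ∑ n ∈ Icc 1 (N + 1), a ^ (N + 1 - n) * f n
      = a * ∑ n ∈ Icc 1 N, a ^ (N - n) * f n + f (N + 1) := by
  rw [sum_Icc_succ_top (by omega), Nat.sub_self, pow_zero, one_mul, mul_sum]
  congr 1
  refine sum_congr rfl fun n hn => ?_
  rw [Nat.sub_add_comm (mem_Icc.mp hn).2, pow_succ]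
  ring

theorem eq_sum_Icc_pow_sub_mul_of_recurrence [CommSemiring R] {a : R} {u V : ℕ → R}
    (hV0 : V 0 = 0) (hV : ∀ n, V (n + 1) = a * V n + u (n + 1)) (N : ℕ) :
    V N = ∑ n ∈ Icc 1 N, a ^ (N - n) * u n := by
  induction N with
  | zero => simp [hV0]
  | succ N ih => rw [sum_Icc_pow_sub_mul_succ, ← ih, hV]

theorem one_sub_mul_sum_Icc_pow_sub [CommRing R] (a : R) (N : ℕ) :
    (1 - a) * ∑ n ∈ Icc 1 N, a ^ (N - n) = 1 - a ^ N := by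
  induction N with
  | zero => simp
  | succ N ih =>
    have h := sum_Icc_pow_sub_mul_succ a (fun _ => 1) N
    simp only [mul_one] at h
    rw [h, pow_succ]
    linear_combination a * ih

end DiscountedSum

theorem lif_weighted_rate_eq_general (Vth lam dt : ℝ)
    (hlam1 : lam < 1)
    (I V s : ℕ → ℝ)
    (hV0 : V 0 = 0)
    (hV : ∀ n : ℕ, V (n + 1) = (lam * V n + (1 - lam) * I (n + 1)) - Vth * s (n + 1)) :
    ∀ N : ℕ, 1 ≤ N →
      Vth * (∑ n ∈ Finset.Icc 1 N, lam ^ (N - n) * s n)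
          / (dt * ∑ n ∈ Finset.Icc 1 N, lam ^ (N - n))
        = ((1 - lam) / dt)
              * ((∑ n ∈ Finset.Icc 1 N, lam ^ (N - n) * I n)
                  / (∑ n ∈ Finset.Icc 1 N, lam ^ (N - n)))
            - ((1 - lam) / (dt * (1 - lam ^ N))) * V N := by
  intro N _
  have hVN : V N = (1 - lam) * ∑ n ∈ Icc 1 N, lam ^ (N - n) * I n
      - Vth * ∑ n ∈ Icc 1 N, lam ^ (N - n) * s n := by
    rw [eq_sum_Icc_pow_sub_mul_of_recurrence (u := fun n => (1 - lam) * I n - Vth * s n) hV0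
      (fun n => by rw [hV]; ring) N, mul_sum, mul_sum, ← sum_sub_distrib]
    exact sum_congr rfl fun n _ => by ring
  have hlam : 1 - lam ≠ 0 := by linarith
  rw [← one_sub_mul_sum_Icc_pow_sub, mul_left_comm, div_mul_cancel_left₀ hlam, hVN]
  ring

/-- For a discrete-time LIF neuron with threshold `Vth > 0`, leak
factor `lam ∈ (0,1)` and discretization step `dt > 0`, for every `N ≥ 1` the scaled
weighted firing rate `â N` satisfies
`â N = ((1 − lam)/dt) · Î N − ((1 − lam)/(dt·(1 − lam^N))) · V N`,
where `Î N` is the weighted average input current. -/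
theorem lif_weighted_rate_eq (Vth lam dt : ℝ) (hVth : 0 < Vth)
    (hlam0 : 0 < lam) (hlam1 : lam < 1) (hdt : 0 < dt)
    (I V s : ℕ → ℝ)
    (hV0 : V 0 = 0)
    (hs : ∀ n : ℕ, s (n + 1) = if Vth ≤ lam * V n + (1 - lam) * I (n + 1) then 1 else 0)
    (hV : ∀ n : ℕ, V (n + 1) = (lam * V n + (1 - lam) * I (n + 1)) - Vth * s (n + 1)) :
    ∀ N : ℕ, 1 ≤ N →
      Vth * (∑ n ∈ Finset.Icc 1 N, lam ^ (N - n) * s n)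
          / (dt * ∑ n ∈ Finset.Icc 1 N, lam ^ (N - n))
        = ((1 - lam) / dt)
              * ((∑ n ∈ Finset.Icc 1 N, lam ^ (N - n) * I n)
                  / (∑ n ∈ Finset.Icc 1 N, lam ^ (N - n)))
            - ((1 - lam) / (dt * (1 - lam ^ N))) * V N :=
  lif_weighted_rate_eq_general Vth lam dt hlam1 I V s hV0 hV
end

section
/- If V[N]/N → 0 as N → ∞ and the average input currents converge, Ī[N] → I*, then the scaled firing rates converge to the same limit, a[N] → I*; moreover I* ∈ [0, V_th], so that I* = clamp(I*, 0, V_th) where clamp(x,a,b) := max(a, min(x,b)). -/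
/-!
Summing the update rule telescopes to `V N = ∑ I - Vth * ∑ s`, so the scaled firing rate is the
mean input minus `V N / N`, which tends to `Istar`. Since every spike is `0` or `1`, the rates lie
in `[0, Vth]`, and hence so does their limit.
-/

open Filter Topology

theorem eq_sum_Icc_sub_mul_sum_Icc {R : Type*} [CommRing R] {c : R} {I V s : ℕ → R}
    (hV0 : V 0 = 0) (hV : ∀ n, V (n + 1) = V n + I (n + 1) - c * s (n + 1)) (N : ℕ) :
    V N = ∑ n ∈ Finset.Icc 1 N, I n - c * ∑ n ∈ Finset.Icc 1 N, s n := by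
  induction N with
  | zero => simp [hV0]
  | succ N ih =>
    rw [Finset.sum_Icc_succ_top (by omega), Finset.sum_Icc_succ_top (by omega), hV, ih]
    ring

theorem tendsto_div_mul_sum_Icc {c L : ℝ} {I V s : ℕ → ℝ}
    (hV0 : V 0 = 0) (hV : ∀ n, V (n + 1) = V n + I (n + 1) - c * s (n + 1))
    (hVN : Tendsto (fun N : ℕ => V N / N) atTop (𝓝 0))
    (hI : Tendsto (fun N : ℕ => (1 / (N : ℝ)) * ∑ n ∈ Finset.Icc 1 N, I n) atTop (𝓝 L)) :
    Tendsto (fun N : ℕ => (c / N) * ∑ n ∈ Finset.Icc 1 N, s n) atTop (𝓝 L) := by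
  have hrate : ∀ N : ℕ, (1 / (N : ℝ)) * ∑ n ∈ Finset.Icc 1 N, I n - V N / N =
      (c / N) * ∑ n ∈ Finset.Icc 1 N, s n := fun N => by
    rw [eq_sum_Icc_sub_mul_sum_Icc hV0 hV N]
    ring
  simpa only [sub_zero, hrate] using hI.sub hVN

theorem div_mul_sum_Icc_mem_Icc {c : ℝ} (hc : 0 ≤ c) {s : ℕ → ℝ}
    (hs : ∀ n, s (n + 1) ∈ Set.Icc 0 1) (N : ℕ) :
    (c / N) * ∑ n ∈ Finset.Icc 1 N, s n ∈ Set.Icc 0 c := by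
  have hs' : ∀ n ∈ Finset.Icc 1 N, s n ∈ Set.Icc 0 1 := fun n hn => by
    obtain ⟨k, rfl⟩ := Nat.exists_eq_add_of_le' (Finset.mem_Icc.1 hn).1
    exact hs k
  have hsum_le : ∑ n ∈ Finset.Icc 1 N, s n ≤ N := by
    simpa using Finset.sum_le_sum fun n hn => (hs' n hn).2
  refine ⟨mul_nonneg (by positivity) (Finset.sum_nonneg fun n hn => (hs' n hn).1), ?_⟩
  rcases N.eq_zero_or_pos with rfl | hN
  · simpa using hc
  calc (c / N) * ∑ n ∈ Finset.Icc 1 N, s n ≤ (c / N) * N := by gcongr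
    _ = c := div_mul_cancel₀ c (by positivity)

/-- For the discrete-time IF neuron: if `V N / N → 0` and the average
input currents `Ī N` converge to `Istar`, then the scaled firing rates `a N` converge to
`Istar` as well; moreover `Istar ∈ [0, Vth]`, so that `Istar = clamp(Istar, 0, Vth)`
where `clamp x a b = max a (min x b)`. -/
theorem if_rate_tendsto_of_mean_tendsto (Vth : ℝ) (hVth : 0 < Vth)
    (I V s : ℕ → ℝ)
    (hV0 : V 0 = 0)
    (hs : ∀ n : ℕ, s (n + 1) = if Vth ≤ V n + I (n + 1) then 1 else 0)
    (hV : ∀ n : ℕ, V (n + 1) = (V n + I (n + 1)) - Vth * s (n + 1))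
    (Istar : ℝ)
    (hVN : Tendsto (fun N : ℕ => V N / N) atTop (nhds 0))
    (hI : Tendsto (fun N : ℕ => (1 / (N : ℝ)) * ∑ n ∈ Finset.Icc 1 N, I n)
            atTop (nhds Istar)) :
    Tendsto (fun N : ℕ => (Vth / N) * ∑ n ∈ Finset.Icc 1 N, s n) atTop (nhds Istar) ∧
    0 ≤ Istar ∧ Istar ≤ Vth ∧ Istar = max 0 (min Istar Vth) := by
  have hrate := tendsto_div_mul_sum_Icc hV0 hV hVN hI
  have hspike : ∀ n, s (n + 1) ∈ Set.Icc 0 1 := fun n => by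
    rw [hs n]
    split_ifs <;> norm_num
  obtain ⟨h0, h1⟩ : Istar ∈ Set.Icc 0 Vth :=
    isClosed_Icc.mem_of_tendsto hrate
      (Eventually.of_forall (div_mul_sum_Icc_mem_Icc hVth.le hspike))
  exact ⟨hrate, h0, h1, by rw [min_eq_left h1, max_eq_right h0]⟩
end

section
/- If the input currents satisfy 0 ≤ I[n] ≤ V_th for all n ≥ 1, then the membrane potential of the IF neuron remains bounded: 0 ≤ V[N] ≤ V_th for all N ≥ 0. Consequently, if in addition Ī[N] → I* as N → ∞, then a[N] → I*. -/
open Filter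

/-! Reset by subtraction keeps the potential in `[0, V_th]` whenever each input lies in
`[0, V_th]`, and it telescopes: `V N = ∑ I n - V_th ∑ s n`. Dividing by `N`, the scaled firing
rate differs from the average input by `V N / N`, which tends to zero because `V` is bounded. -/

theorem sub_mul_ite_le_mem_Icc {θ u : ℝ} (hu₀ : 0 ≤ u) (hu : u ≤ 2 * θ) :
    u - θ * (if θ ≤ u then 1 else 0) ∈ Set.Icc 0 θ := by
  split_ifs with h <;> constructor <;> linarith

theorem tendsto_div_natCast_zero_of_mem_Icc {u : ℕ → ℝ} {a b : ℝ}
    (hu : ∀ n, u n ∈ Set.Icc a b) : Tendsto (fun n : ℕ => u n / n) atTop (nhds 0) := by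
  have hbdd : IsBoundedUnder (· ≤ ·) atTop (fun n => ‖u n‖) :=
    isBoundedUnder_of ⟨max |a| |b|, fun n => abs_le_max_abs_abs (hu n).1 (hu n).2⟩
  simpa [div_eq_inv_mul] using
    (tendsto_inv_atTop_zero.comp tendsto_natCast_atTop_atTop).zero_mul_isBoundedUnder_le hbdd

section IFNeuron

variable {Vth : ℝ} {I V s : ℕ → ℝ}

theorem if_potential_mem_Icc (hVth : 0 ≤ Vth) (hV0 : V 0 = 0)
    (hs : ∀ n : ℕ, s (n + 1) = if Vth ≤ V n + I (n + 1) then 1 else 0)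
    (hV : ∀ n : ℕ, V (n + 1) = (V n + I (n + 1)) - Vth * s (n + 1))
    (hI : ∀ n : ℕ, I (n + 1) ∈ Set.Icc 0 Vth) (N : ℕ) : V N ∈ Set.Icc 0 Vth := by
  induction N with
  | zero => simpa [hV0] using hVth
  | succ n ih =>
    rw [hV n, hs n]
    exact sub_mul_ite_le_mem_Icc (add_nonneg ih.1 (hI n).1) (by linarith [ih.2, (hI n).2])

theorem if_potential_eq_sum_sub_sum (hV0 : V 0 = 0)
    (hV : ∀ n : ℕ, V (n + 1) = (V n + I (n + 1)) - Vth * s (n + 1)) (N : ℕ) :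
    V N = ∑ n ∈ Finset.Icc 1 N, I n - Vth * ∑ n ∈ Finset.Icc 1 N, s n := by
  induction N with
  | zero => simp [hV0]
  | succ n ih =>
    rw [Finset.sum_Icc_succ_top (by omega), Finset.sum_Icc_succ_top (by omega), hV n, ih]
    ring

end IFNeuron

/-- For the discrete-time IF neuron: if the input currents satisfy
`0 ≤ I n ≤ Vth` for all `n ≥ 1`, then the membrane potential remains bounded,
`0 ≤ V N ≤ Vth` for all `N ≥ 0`. Consequently, if in addition the average input
currents converge, `Ī N → Istar`, then the scaled firing rates converge,
`a N → Istar`. -/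
theorem if_potential_bounded_and_rate_tendsto (Vth : ℝ) (hVth : 0 < Vth)
    (I V s : ℕ → ℝ)
    (hV0 : V 0 = 0)
    (hs : ∀ n : ℕ, s (n + 1) = if Vth ≤ V n + I (n + 1) then 1 else 0)
    (hV : ∀ n : ℕ, V (n + 1) = (V n + I (n + 1)) - Vth * s (n + 1))
    (hI : ∀ n : ℕ, 1 ≤ n → 0 ≤ I n ∧ I n ≤ Vth) :
    (∀ N : ℕ, 0 ≤ V N ∧ V N ≤ Vth) ∧
    (∀ Istar : ℝ,
      Tendsto (fun N : ℕ => (1 / (N : ℝ)) * ∑ n ∈ Finset.Icc 1 N, I n)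
        atTop (nhds Istar) →
      Tendsto (fun N : ℕ => (Vth / N) * ∑ n ∈ Finset.Icc 1 N, s n)
        atTop (nhds Istar)) := by
  have hbound := if_potential_mem_Icc hVth.le hV0 hs hV fun n => hI (n + 1) n.succ_pos
  refine ⟨hbound, fun Istar hconv => ?_⟩
  have hrate : ∀ N : ℕ, (Vth / N) * ∑ n ∈ Finset.Icc 1 N, s n
      = (1 / (N : ℝ)) * ∑ n ∈ Finset.Icc 1 N, I n - V N / N := fun N => by
    rw [if_potential_eq_sum_sub_sum hV0 hV N]
    ring
  simpa [hrate] using hconv.sub (tendsto_div_natCast_zero_of_mem_Icc hbound)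
end

section
/- For every N ≥ 1, the total number of spikes of the IF neuron is bounded by the largest prefix sum of the input currents: V_th·∑_{n=1}^N s[n] ≤ max(0, max_{1≤m≤N} ∑_{n=1}^m I[n]). -/
/-!
Writing `P n` and `S n` for the prefix sums of the currents and of the spikes, the reset rule
gives the invariant `V n = P n - V_th * S n`. Right after a spike the potential is nonnegative,
so `V_th * S n ≤ P n` at every spike time `n`; between spikes `S` is constant. Hence
`V_th * S N` is either `0` or bounded by the prefix sum at the last spike time before `N`.
-/

open Finset

section RunningBound

variable {α : Type*} [LinearOrder α] {b : α} {f P : ℕ → α}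

theorem le_or_exists_le_of_step (h0 : f 0 ≤ b)
    (hstep : ∀ n, f (n + 1) ≤ f n ∨ f (n + 1) ≤ P (n + 1)) (N : ℕ) :
    f N ≤ b ∨ ∃ m ∈ Icc 1 N, f N ≤ P m := by
  induction N with
  | zero => exact .inl h0
  | succ n ih =>
    rcases hstep n with hle | hle
    · rcases ih with hb | ⟨m, hm, hP⟩
      · exact .inl (hle.trans hb)
      · exact .inr ⟨m, Icc_subset_Icc_right n.le_succ hm, hle.trans hP⟩
    · exact .inr ⟨n + 1, by simp, hle⟩

theorem le_max_sup'_of_step (h0 : f 0 ≤ b)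
    (hstep : ∀ n, f (n + 1) ≤ f n ∨ f (n + 1) ≤ P (n + 1)) (N : ℕ) (hN : 1 ≤ N) :
    f N ≤ max b ((Icc 1 N).sup' (nonempty_Icc.mpr hN) P) := by
  rcases le_or_exists_le_of_step h0 hstep N with hb | ⟨m, hm, hP⟩
  · exact le_max_of_le_left hb
  · exact le_max_of_le_right (hP.trans (le_sup' P hm))

end RunningBound

section IntegrateAndFire

variable {Vth : ℝ} {I V s : ℕ → ℝ}

theorem membrane_eq_sub_spike_sum (hV0 : V 0 = 0)
    (hV : ∀ n, V (n + 1) = (V n + I (n + 1)) - Vth * s (n + 1)) (n : ℕ) :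
    V n = ∑ k ∈ Icc 1 n, I k - Vth * ∑ k ∈ Icc 1 n, s k := by
  induction n with
  | zero => simp [hV0]
  | succ m ih =>
    rw [sum_Icc_succ_top (by omega), sum_Icc_succ_top (by omega), hV m, ih]
    ring

theorem spike_charge_le_prev_or_le_prefix_sum (hV0 : V 0 = 0)
    (hs : ∀ n, s (n + 1) = if Vth ≤ V n + I (n + 1) then 1 else 0)
    (hV : ∀ n, V (n + 1) = (V n + I (n + 1)) - Vth * s (n + 1)) (n : ℕ) :
    Vth * ∑ k ∈ Icc 1 (n + 1), s k ≤ Vth * ∑ k ∈ Icc 1 n, s k ∨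
      Vth * ∑ k ∈ Icc 1 (n + 1), s k ≤ ∑ k ∈ Icc 1 (n + 1), I k := by
  by_cases hfire : Vth ≤ V n + I (n + 1)
  · have hspike : s (n + 1) = 1 := by rw [hs n, if_pos hfire]
    have hreset : 0 ≤ V (n + 1) := by rw [hV n, hspike]; linarith
    have hinv := membrane_eq_sub_spike_sum hV0 hV (n + 1)
    right
    linarith
  · have hquiet : s (n + 1) = 0 := by rw [hs n, if_neg hfire]
    left
    rw [sum_Icc_succ_top (by omega), hquiet, add_zero]

end IntegrateAndFire

theorem if_spike_count_le_max_prefix_sum_general (Vth : ℝ)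
    (I V s : ℕ → ℝ)
    (hV0 : V 0 = 0)
    (hs : ∀ n : ℕ, s (n + 1) = if Vth ≤ V n + I (n + 1) then 1 else 0)
    (hV : ∀ n : ℕ, V (n + 1) = (V n + I (n + 1)) - Vth * s (n + 1)) :
    ∀ N : ℕ, (hN : 1 ≤ N) →
      Vth * ∑ n ∈ Finset.Icc 1 N, s n
        ≤ max 0 ((Finset.Icc 1 N).sup' (Finset.nonempty_Icc.mpr hN)
            (fun m => ∑ n ∈ Finset.Icc 1 m, I n)) :=
  le_max_sup'_of_step (f := fun N => Vth * ∑ n ∈ Icc 1 N, s n) (by simp)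
    (spike_charge_le_prev_or_le_prefix_sum hV0 hs hV)

/-- For the discrete-time IF neuron, for every `N ≥ 1` the total
number of spikes is bounded by the largest prefix sum of the input currents:
`Vth · ∑_{n=1}^N s n ≤ max(0, max_{1 ≤ m ≤ N} ∑_{n=1}^m I n)`. -/
theorem if_spike_count_le_max_prefix_sum (Vth : ℝ) (hVth : 0 < Vth)
    (I V s : ℕ → ℝ)
    (hV0 : V 0 = 0)
    (hs : ∀ n : ℕ, s (n + 1) = if Vth ≤ V n + I (n + 1) then 1 else 0)
    (hV : ∀ n : ℕ, V (n + 1) = (V n + I (n + 1)) - Vth * s (n + 1)) :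
    ∀ N : ℕ, (hN : 1 ≤ N) →
      Vth * ∑ n ∈ Finset.Icc 1 N, s n
        ≤ max 0 ((Finset.Icc 1 N).sup' (Finset.nonempty_Icc.mpr hN)
            (fun m => ∑ n ∈ Finset.Icc 1 m, I n)) :=
  if_spike_count_le_max_prefix_sum_general Vth I V s hV0 hs hV
end

section
/- If limsup_{N→∞} Ī[N] < 0, then the IF neuron fires only finitely many spikes (s[n] = 1 for only finitely many n), and consequently the scaled firing rates converge to zero: a[N] → 0 as N → ∞. -/
/-!
Summing the reset rule gives the balance `∑_{n ≤ N} I n = V N + V_th · #spikes(≤ N)`. Right after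
a spike the potential is nonnegative, so at every spike time the cumulative input is nonnegative.
Since the average input is eventually negative, spikes stop; the spike count is then eventually
constant and its Cesàro average tends to zero.
-/

open Filter Topology Finset

theorem Finset.sum_Icc_one_eq_sum_range_succ {M : Type*} [AddCommMonoid M] (f : ℕ → M) (N : ℕ) :
    ∑ n ∈ Icc 1 N, f n = ∑ i ∈ range N, f (i + 1) := by
  rw [range_eq_Ico, sum_Ico_add' f 0 N 1, zero_add, Ico_add_one_right_eq_Icc]

-- `b ≤ 0` is needed because an unbounded-above sequence has the junk value `limsup = 0` in `ℝ`.
theorem Real.eventually_lt_of_limsup_lt_of_nonpos {ι : Type*} {l : Filter ι} {u : ι → ℝ} {b : ℝ}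
    (hb : b ≤ 0) (h : limsup u l < b) : ∀ᶠ i in l, u i < b := by
  by_cases hu : IsBoundedUnder (· ≤ ·) l u
  · exact eventually_lt_of_limsup_lt h hu
  · rw [Real.limsup_of_not_isBoundedUnder hu] at h
    exact absurd hb (not_le.2 h)

theorem tendsto_const_div_mul_sum_Icc_of_eventually_eq_zero {s : ℕ → ℝ}
    (hs : ∀ᶠ n in atTop, s (n + 1) = 0) (c : ℝ) :
    Tendsto (fun N : ℕ => (c / N) * ∑ n ∈ Icc 1 N, s n) atTop (𝓝 0) := by
  have hcesaro : Tendsto (fun N : ℕ => (N⁻¹ : ℝ) * ∑ i ∈ range N, s (i + 1)) atTop (𝓝 0) :=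
    (tendsto_const_nhds.congr' (hs.mono fun _ h => h.symm)).cesaro
  simpa [sum_Icc_one_eq_sum_range_succ, div_eq_mul_inv, mul_assoc] using hcesaro.const_mul c

namespace IFNeuron

variable {Vth : ℝ} {I V s : ℕ → ℝ}

theorem spike_eq_zero_or_one (hs : ∀ n : ℕ, s (n + 1) = if Vth ≤ V n + I (n + 1) then 1 else 0)
    (n : ℕ) : s (n + 1) = 0 ∨ s (n + 1) = 1 := by
  rw [hs n]; split_ifs <;> simp

theorem sum_input_eq_potential_add_spikes (hV0 : V 0 = 0)
    (hV : ∀ n : ℕ, V (n + 1) = (V n + I (n + 1)) - Vth * s (n + 1)) (N : ℕ) :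
    ∑ n ∈ Icc 1 N, I n = V N + Vth * ∑ n ∈ Icc 1 N, s n := by
  induction N with
  | zero => simp [hV0]
  | succ k ih =>
    rw [sum_Icc_succ_top (by omega), sum_Icc_succ_top (by omega), ih, hV k]
    ring

theorem potential_nonneg_of_spike
    (hs : ∀ n : ℕ, s (n + 1) = if Vth ≤ V n + I (n + 1) then 1 else 0)
    (hV : ∀ n : ℕ, V (n + 1) = (V n + I (n + 1)) - Vth * s (n + 1)) {n : ℕ}
    (hspike : s (n + 1) = 1) : 0 ≤ V (n + 1) := by
  have hfire : Vth ≤ V n + I (n + 1) := by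
    by_contra hlt
    rw [hs n, if_neg hlt] at hspike
    exact zero_ne_one hspike
  rw [hV n, hspike]
  linarith

theorem sum_input_nonneg_of_spike (hVth : 0 ≤ Vth) (hV0 : V 0 = 0)
    (hs : ∀ n : ℕ, s (n + 1) = if Vth ≤ V n + I (n + 1) then 1 else 0)
    (hV : ∀ n : ℕ, V (n + 1) = (V n + I (n + 1)) - Vth * s (n + 1)) {n : ℕ}
    (hspike : s (n + 1) = 1) : 0 ≤ ∑ k ∈ Icc 1 (n + 1), I k := by
  have hcount : 0 ≤ ∑ k ∈ Icc 1 (n + 1), s k := by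
    rw [sum_Icc_one_eq_sum_range_succ]
    exact sum_nonneg fun m _ => by rcases spike_eq_zero_or_one hs m with h | h <;> simp [h]
  rw [sum_input_eq_potential_add_spikes hV0 hV]
  have := potential_nonneg_of_spike hs hV hspike
  positivity

end IFNeuron

/-- For the discrete-time IF neuron: if
`limsup_{N→∞} Ī N < 0`, then the neuron fires only finitely many spikes (`s n = 1`
for only finitely many `n ≥ 1`), and consequently the scaled firing rates converge to
zero: `a N → 0`. -/
theorem if_finitely_many_spikes_of_limsup_neg (Vth : ℝ) (hVth : 0 < Vth)
    (I V s : ℕ → ℝ)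
    (hV0 : V 0 = 0)
    (hs : ∀ n : ℕ, s (n + 1) = if Vth ≤ V n + I (n + 1) then 1 else 0)
    (hV : ∀ n : ℕ, V (n + 1) = (V n + I (n + 1)) - Vth * s (n + 1))
    (hlimsup : Filter.limsup
        (fun N : ℕ => (1 / (N : ℝ)) * ∑ n ∈ Finset.Icc 1 N, I n) atTop < 0) :
    {n : ℕ | 1 ≤ n ∧ s n = 1}.Finite ∧
    Tendsto (fun N : ℕ => (Vth / N) * ∑ n ∈ Finset.Icc 1 N, s n)
      atTop (nhds 0) := by
  have hneg : ∀ᶠ n in atTop, (1 / ((n + 1 : ℕ) : ℝ)) * ∑ k ∈ Icc 1 (n + 1), I k < 0 :=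
    (tendsto_add_atTop_nat 1).eventually (Real.eventually_lt_of_limsup_lt_of_nonpos le_rfl hlimsup)
  have hsilent : ∀ᶠ n in atTop, s (n + 1) = 0 := hneg.mono fun n hn =>
    (IFNeuron.spike_eq_zero_or_one hs n).resolve_right fun hspike => by
      have := IFNeuron.sum_input_nonneg_of_spike hVth.le hV0 hs hV hspike
      have : 0 ≤ (1 / ((n + 1 : ℕ) : ℝ)) * ∑ k ∈ Icc 1 (n + 1), I k := by positivity
      linarith
  have hno_spike : ∀ᶠ n in atTop, s n ≠ 1 := by
    rw [← map_add_atTop_eq_nat 1]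
    exact hsilent.mono fun n h => by simp [h]
  exact ⟨(Set.not_infinite.1 fun hinf => Nat.frequently_atTop_iff_infinite.2 hinf hno_spike).subset
      fun _ hn => hn.2,
    tendsto_const_div_mul_sum_Icc_of_eventually_eq_zero hsilent Vth⟩
end

section
/- (Proposition 2) Suppose a^0[N] → z^0 as N → ∞, and define z^i = clamp(W^i·z^{i−1}, 0, V_th^i) componentwise for i = 1,…,L, where clamp(x,a,b) := max(a, min(x,b)). Assume for every layer i and coordinate j, writing c := (W^i·z^{i−1})_j: (a) if c < 0 then s^i[n]_j = 1 for only finitely many n; (b) if c > V_th^i then s^i[n]_j = 0 for only finitely many n; (c) if 0 ≤ c ≤ V_th^i then V^i[N]_j/N → 0. Then for every i = 1,…,L, the scaled firing rates converge: a^i[N] → z^i as N → ∞. -/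
/-!
Summing the membrane update `V[n] = V[n-1] + x[n] - θ s[n]` telescopes to
`θ ∑ s = ∑ x - V[N]`, so the output rate of a neuron is its input rate minus `V[N]/N`.
By induction over the layers the input rate of neuron `j` of layer `i` tends to
`c = (W^i z^{i-1})_j`. If `0 ≤ c ≤ V_th` the potential term vanishes by (c). Otherwise the
neuron eventually never fires (`c < 0`) or always fires (`c > V_th`), and its rate tends to
`0` or `V_th`: in each case to the clamp of `c`.
-/

open Filter Topology Finset Matrix

/-- `firingRate (V_th^i) (fun n => s^i[n]_j) N` is the paper's `a^i[N]_j`. -/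
noncomputable def firingRate (θ : ℝ) (s : ℕ → ℝ) (N : ℕ) : ℝ :=
  θ / N * ∑ n ∈ Icc 1 N, s n

theorem tendsto_firingRate_zero_of_finite {g : ℕ → ℝ} (θ : ℝ)
    (hg : {n : ℕ | 1 ≤ n ∧ g n ≠ 0}.Finite) :
    Tendsto (firingRate θ g) atTop (𝓝 0) := by
  obtain ⟨K, hK⟩ := hg.bddAbove
  have hsum : ∀ N ≥ K, ∑ n ∈ Icc 1 N, g n = ∑ n ∈ Icc 1 K, g n := fun N hN =>
    (sum_subset (Icc_subset_Icc_right hN) fun n hnN hnK => by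
      by_contra hgn
      simp only [mem_Icc, not_and, not_le] at hnN hnK
      exact (hnK hnN.1).not_ge (hK ⟨hnN.1, hgn⟩)).symm
  refine (tendsto_const_div_atTop_nhds_zero_nat (θ * ∑ n ∈ Icc 1 K, g n)).congr' ?_
  filter_upwards [eventually_ge_atTop K] with N hN
  rw [firingRate, hsum N hN, div_mul_eq_mul_div]

theorem firingRate_one_sub {s : ℕ → ℝ} (θ : ℝ) {N : ℕ} (hN : N ≠ 0) :
    firingRate θ (fun n => 1 - s n) N = θ - firingRate θ s N := by
  have hN' : (N : ℝ) ≠ 0 := Nat.cast_ne_zero.mpr hN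
  simp only [firingRate, sum_sub_distrib, sum_const, Nat.card_Icc, add_tsub_cancel_right,
    nsmul_eq_mul, mul_one]
  field_simp

theorem firingRate_mulVec {m k : ℕ} (A : Matrix (Fin m) (Fin k) ℝ) (θ : ℝ)
    (v : ℕ → Fin k → ℝ) (N : ℕ) (j : Fin m) :
    firingRate 1 (fun n => θ * (A *ᵥ v n) j) N
      = (A *ᵥ fun l => firingRate θ (fun n => v n l) N) j := by
  simp only [firingRate, Matrix.mulVec, dotProduct, mul_sum]
  rw [sum_comm]
  exact sum_congr rfl fun l _ => sum_congr rfl fun n _ => by ring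

namespace IFNeuron

variable {θ : ℝ} {x s V : ℕ → ℝ}

theorem mul_sum_spikes_eq (hV0 : V 0 = 0)
    (hV : ∀ n, V (n + 1) = V n + x (n + 1) - θ * s (n + 1)) (N : ℕ) :
    θ * ∑ n ∈ Icc 1 N, s n = ∑ n ∈ Icc 1 N, x n - V N := by
  induction N with
  | zero => simp [hV0]
  | succ N ih =>
    rw [sum_Icc_succ_top N.succ_pos, sum_Icc_succ_top N.succ_pos, hV]
    linarith

theorem firingRate_eq (hV0 : V 0 = 0)
    (hV : ∀ n, V (n + 1) = V n + x (n + 1) - θ * s (n + 1)) (N : ℕ) :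
    firingRate θ s N = firingRate 1 x N - V N / N := by
  rw [firingRate, firingRate, div_mul_eq_mul_div, mul_sum_spikes_eq hV0 hV, one_div_mul_eq_div,
    sub_div]

theorem tendsto_firingRate_of_tendsto_potential {c : ℝ} (hV0 : V 0 = 0)
    (hV : ∀ n, V (n + 1) = V n + x (n + 1) - θ * s (n + 1))
    (hx : Tendsto (firingRate 1 x) atTop (𝓝 c))
    (hpot : Tendsto (fun N : ℕ => V N / N) atTop (𝓝 0)) :
    Tendsto (firingRate θ s) atTop (𝓝 c) := by
  simpa [funext (firingRate_eq hV0 hV)] using hx.sub hpot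

theorem tendsto_firingRate_zero_of_finite_spikes (hs : ∀ n, s (n + 1) = 0 ∨ s (n + 1) = 1)
    (hfin : {n : ℕ | 1 ≤ n ∧ s n = 1}.Finite) :
    Tendsto (firingRate θ s) atTop (𝓝 0) := by
  refine tendsto_firingRate_zero_of_finite θ (hfin.subset ?_)
  rintro (_ | n) ⟨hn, hsn⟩
  · omega
  · exact ⟨hn, (hs n).resolve_left hsn⟩

theorem tendsto_firingRate_threshold_of_finite_silences
    (hs : ∀ n, s (n + 1) = 0 ∨ s (n + 1) = 1)
    (hfin : {n : ℕ | 1 ≤ n ∧ s n = 0}.Finite) :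
    Tendsto (firingRate θ s) atTop (𝓝 θ) := by
  have hsilent : Tendsto (firingRate θ fun n => 1 - s n) atTop (𝓝 0) := by
    refine tendsto_firingRate_zero_of_finite θ (hfin.subset ?_)
    rintro (_ | n) ⟨hn, hsn⟩
    · omega
    · refine ⟨hn, (hs n).resolve_right fun h => hsn ?_⟩
      rw [h, sub_self]
  have hlim := (tendsto_const_nhds (x := θ)).sub hsilent
  rw [sub_zero] at hlim
  refine hlim.congr' ?_
  filter_upwards [eventually_ne_atTop 0] with N hN
  rw [firingRate_one_sub θ hN, sub_sub_cancel]

theorem tendsto_firingRate_clamp {c : ℝ} (hθ : 0 ≤ θ) (hV0 : V 0 = 0)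
    (hV : ∀ n, V (n + 1) = V n + x (n + 1) - θ * s (n + 1))
    (hs : ∀ n, s (n + 1) = 0 ∨ s (n + 1) = 1)
    (hx : Tendsto (firingRate 1 x) atTop (𝓝 c))
    (ha : c < 0 → {n : ℕ | 1 ≤ n ∧ s n = 1}.Finite)
    (hb : θ < c → {n : ℕ | 1 ≤ n ∧ s n = 0}.Finite)
    (hc : 0 ≤ c → c ≤ θ → Tendsto (fun N : ℕ => V N / N) atTop (𝓝 0)) :
    Tendsto (firingRate θ s) atTop (𝓝 (max 0 (min c θ))) := by
  rcases lt_or_ge c 0 with hneg | hnonneg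
  · rw [min_eq_left (hneg.le.trans hθ), max_eq_left hneg.le]
    exact tendsto_firingRate_zero_of_finite_spikes hs (ha hneg)
  rcases le_or_gt c θ with hle | hgt
  · rw [min_eq_left hle, max_eq_right hnonneg]
    exact tendsto_firingRate_of_tendsto_potential hV0 hV hx (hc hnonneg hle)
  · rw [min_eq_right hgt.le, max_eq_right hθ]
    exact tendsto_firingRate_threshold_of_finite_silences hs (hb hgt)

end IFNeuron

/-- **Proposition 2.** An `L`-layer feedforward IF spiking network with
layer sizes `d 0, …, d L`, weights `W i : ℝ^{d (i+1) × d i}` (feeding layer `i+1`),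
thresholds `Vth i > 0` for `1 ≤ i ≤ L` with the convention `Vth 0 = 1`, and input
sequence `s 0 : ℕ → ℝ^{d 0}`. Suppose the input representation `a⁰ N → z 0`, define
`z (i+1) = clamp(W i · z i, 0, Vth (i+1))` componentwise, and assume for each layer
`i+1 ≤ L` and coordinate `j`, writing `c = (W i · z i)_j`:
(a) if `c < 0` then layer `i+1` fires at `j` only finitely often;
(b) if `c > Vth (i+1)` then layer `i+1` is silent at `j` only finitely often;
(c) if `0 ≤ c ≤ Vth (i+1)` then `V (i+1) N j / N → 0`.
Then for every `i = 1, …, L` the scaled firing rates converge: `aⁱ N → z i`. -/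
theorem if_network_rate_tendsto (L : ℕ) (d : ℕ → ℕ)
    (W : (i : ℕ) → Matrix (Fin (d (i + 1))) (Fin (d i)) ℝ)
    (Vth : ℕ → ℝ) (hVth0 : Vth 0 = 1)
    (hVth : ∀ i : ℕ, 1 ≤ i → i ≤ L → 0 < Vth i)
    (s : (i : ℕ) → ℕ → Fin (d i) → ℝ)
    (V : (i : ℕ) → ℕ → Fin (d i) → ℝ)
    (hV0 : ∀ i : ℕ, i < L → ∀ j, V (i + 1) 0 j = 0)
    (hs : ∀ i : ℕ, i < L → ∀ n : ℕ, ∀ j,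
      s (i + 1) (n + 1) j
        = if Vth (i + 1)
              ≤ V (i + 1) n j + Vth i * (W i).mulVec (s i (n + 1)) j
          then 1 else 0)
    (hV : ∀ i : ℕ, i < L → ∀ n : ℕ, ∀ j,
      V (i + 1) (n + 1) j
        = (V (i + 1) n j + Vth i * (W i).mulVec (s i (n + 1)) j)
            - Vth (i + 1) * s (i + 1) (n + 1) j)
    (z : (i : ℕ) → Fin (d i) → ℝ)
    (hz0 : ∀ j, Tendsto (fun N : ℕ => (1 / (N : ℝ)) * ∑ n ∈ Finset.Icc 1 N, s 0 n j)
            atTop (nhds (z 0 j)))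
    (hzrec : ∀ i : ℕ, i < L → ∀ j,
      z (i + 1) j = max 0 (min ((W i).mulVec (z i) j) (Vth (i + 1))))
    (ha : ∀ i : ℕ, i < L → ∀ j, (W i).mulVec (z i) j < 0 →
      {n : ℕ | 1 ≤ n ∧ s (i + 1) n j = 1}.Finite)
    (hb : ∀ i : ℕ, i < L → ∀ j, Vth (i + 1) < (W i).mulVec (z i) j →
      {n : ℕ | 1 ≤ n ∧ s (i + 1) n j = 0}.Finite)
    (hc : ∀ i : ℕ, i < L → ∀ j,
      0 ≤ (W i).mulVec (z i) j → (W i).mulVec (z i) j ≤ Vth (i + 1) →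
      Tendsto (fun N : ℕ => V (i + 1) N j / N) atTop (nhds 0)) :
    ∀ i : ℕ, 1 ≤ i → i ≤ L → ∀ j,
      Tendsto (fun N : ℕ => (Vth i / N) * ∑ n ∈ Finset.Icc 1 N, s i n j)
        atTop (nhds (z i j)) := by
  suffices h : ∀ i ≤ L, ∀ j, Tendsto (firingRate (Vth i) fun n => s i n j) atTop (𝓝 (z i j)) from
    fun i _ hiL => h i hiL
  intro i
  induction i with
  | zero => intro _ j; rw [hVth0]; exact hz0 j
  | succ i ih =>
    intro hiL j
    have hi : i < L := hiL
    have hinput : Tendsto (firingRate 1 fun n => Vth i * (W i *ᵥ s i n) j) atTop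
        (𝓝 ((W i *ᵥ z i) j)) := by
      refine Tendsto.congr (fun N => (firingRate_mulVec (W i) (Vth i) (s i) N j).symm) ?_
      simp only [Matrix.mulVec, dotProduct]
      exact tendsto_finsetSum _ fun l _ => (ih hi.le l).const_mul _
    have hspike : ∀ n, s (i + 1) (n + 1) j = 0 ∨ s (i + 1) (n + 1) j = 1 := fun n => by
      rw [hs i hi n j]; split_ifs <;> simp
    rw [hzrec i hi j]
    exact IFNeuron.tendsto_firingRate_clamp (hVth (i + 1) i.succ_pos hiL).le (hV0 i hi j)
      (hV i hi · j) hspike hinput (ha i hi j) (hb i hi j) (hc i hi j)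
end

section
/- If 0 ≤ V[N] ≤ V_th for all N ≥ 0 and the weighted average input currents converge, Î[N] → I*, then the scaled weighted firing rates satisfy limsup_{N→∞} |â[N] − ((1−λ)/Δt)·I*| ≤ (1−λ)·V_th/Δt. -/
open Filter Topology

/-!
Unrolling the reset dynamics gives the exact identity `V N = (1 - lam) A N - Vth B N`, where
`A` and `B` are the `lam`-discounted sums of the input currents and of the spikes. Dividing by
`dt W N`, where `W N → 1 / (1 - lam)` is the total discounted weight, the rate error becomes
`(1 - lam) / dt * (Î N - Istar) - V N / (dt W N)`: the first term tends to `0`, and since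
`0 ≤ V N ≤ Vth` the second is at most `Vth / (dt W N) → (1 - lam) Vth / dt` in absolute value.
-/

namespace LIF

variable (lam : ℝ)

def weightedSum (F : ℕ → ℝ) (N : ℕ) : ℝ :=
  ∑ n ∈ Finset.Icc 1 N, lam ^ (N - n) * F n

def totalWeight (N : ℕ) : ℝ :=
  ∑ n ∈ Finset.Icc 1 N, lam ^ (N - n)

theorem weightedSum_succ (F : ℕ → ℝ) (N : ℕ) :
    weightedSum lam F (N + 1) = lam * weightedSum lam F N + F (N + 1) := by
  rw [weightedSum, Finset.sum_Icc_succ_top (by omega), Nat.sub_self, pow_zero, one_mul,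
    weightedSum, Finset.mul_sum]
  congr 1
  refine Finset.sum_congr rfl fun n hn => ?_
  rw [show N + 1 - n = N - n + 1 by have := (Finset.mem_Icc.mp hn).2; omega, pow_succ']
  ring

theorem totalWeight_eq_weightedSum_one (N : ℕ) :
    totalWeight lam N = weightedSum lam 1 N := by
  simp [totalWeight, weightedSum]

theorem totalWeight_eq (hlam : lam ≠ 1) (N : ℕ) :
    totalWeight lam N = (1 - lam ^ N) / (1 - lam) := by
  have hlam' : 1 - lam ≠ 0 := sub_ne_zero.mpr hlam.symm
  induction N with
  | zero => simp [totalWeight]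
  | succ N ih =>
    rw [totalWeight_eq_weightedSum_one, weightedSum_succ, ← totalWeight_eq_weightedSum_one, ih,
      Pi.one_apply]
    field_simp
    ring

theorem tendsto_totalWeight (hlam : |lam| < 1) :
    Tendsto (totalWeight lam) atTop (𝓝 (1 - lam)⁻¹) := by
  have hlam1 : lam ≠ 1 := fun h => by simp [h] at hlam
  have hpow := tendsto_pow_atTop_nhds_zero_of_abs_lt_one hlam
  convert ((tendsto_const_nhds (x := (1 : ℝ))).sub hpow).div_const (1 - lam) using 1
  · exact funext (totalWeight_eq lam hlam1)
  · rw [sub_zero, one_div]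

theorem eq_weightedSum_of_recurrence {V F : ℕ → ℝ} (hV0 : V 0 = 0)
    (hV : ∀ n, V (n + 1) = lam * V n + F (n + 1)) (N : ℕ) :
    V N = weightedSum lam F N := by
  induction N with
  | zero => simp [hV0, weightedSum]
  | succ N ih => rw [hV, ih, weightedSum_succ]

theorem weightedSum_sub_mul (a b : ℝ) (F G : ℕ → ℝ) (N : ℕ) :
    weightedSum lam (fun n => a * F n - b * G n) N
      = a * weightedSum lam F N - b * weightedSum lam G N := by
  simp only [weightedSum, mul_sub, Finset.sum_sub_distrib, Finset.mul_sum]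
  congr 1 <;> refine Finset.sum_congr rfl fun _ _ => by ring

theorem potential_eq {Vth : ℝ} {I V s : ℕ → ℝ} (hV0 : V 0 = 0)
    (hV : ∀ n, V (n + 1) = (lam * V n + (1 - lam) * I (n + 1)) - Vth * s (n + 1)) (N : ℕ) :
    V N = (1 - lam) * weightedSum lam I N - Vth * weightedSum lam s N := by
  rw [eq_weightedSum_of_recurrence lam (F := fun n => (1 - lam) * I n - Vth * s n) hV0
    (fun n => by rw [hV]; ring), weightedSum_sub_mul]

end LIF

theorem abs_rate_error_le {Vth lam dt A B W V Istar : ℝ} (hlam : lam ≤ 1) (hdt : 0 < dt)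
    (hW : 0 < W) (hV : V = (1 - lam) * A - Vth * B) (hV0 : 0 ≤ V) (hVth : V ≤ Vth) :
    |Vth * B / (dt * W) - (1 - lam) / dt * Istar|
      ≤ (1 - lam) / dt * |A / W - Istar| + Vth / (dt * W) := by
  have hsplit : Vth * B / (dt * W) - (1 - lam) / dt * Istar
      = (1 - lam) / dt * (A / W - Istar) - V / (dt * W) := by
    rw [hV]
    field_simp
    ring
  have hleak : 0 ≤ (1 - lam) / dt := div_nonneg (sub_nonneg.mpr hlam) hdt.le
  calc |Vth * B / (dt * W) - (1 - lam) / dt * Istar|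
      ≤ |(1 - lam) / dt * (A / W - Istar)| + |V / (dt * W)| := hsplit ▸ abs_sub _ _
    _ ≤ (1 - lam) / dt * |A / W - Istar| + Vth / (dt * W) := by
      rw [abs_mul, abs_of_nonneg hleak, abs_of_nonneg (div_nonneg hV0 (mul_pos hdt hW).le)]
      gcongr

theorem limsup_le_of_eventually_le_of_tendsto {ι : Type*} {l : Filter ι} [l.NeBot]
    {f g : ι → ℝ} {c L : ℝ} (hf : ∀ i, c ≤ f i) (hfg : ∀ᶠ i in l, f i ≤ g i)
    (hg : Tendsto g l (𝓝 L)) :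
    limsup f l ≤ L :=
  hg.limsup_eq ▸ limsup_le_limsup hfg (isCoboundedUnder_le_of_le l hf) hg.isBoundedUnder_le

theorem lif_rate_limsup_bound_general (Vth lam dt : ℝ)
    (hlam0 : 0 < lam) (hlam1 : lam < 1) (hdt : 0 < dt)
    (I V s : ℕ → ℝ)
    (hV0 : V 0 = 0)
    (hV : ∀ n : ℕ, V (n + 1) = (lam * V n + (1 - lam) * I (n + 1)) - Vth * s (n + 1))
    (hbound : ∀ N : ℕ, 0 ≤ V N ∧ V N ≤ Vth)
    (Istar : ℝ)
    (hI : Tendsto (fun N : ℕ => (∑ n ∈ Finset.Icc 1 N, lam ^ (N - n) * I n)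
            / (∑ n ∈ Finset.Icc 1 N, lam ^ (N - n))) atTop (nhds Istar)) :
    Filter.limsup (fun N : ℕ =>
        |Vth * (∑ n ∈ Finset.Icc 1 N, lam ^ (N - n) * s n)
            / (dt * ∑ n ∈ Finset.Icc 1 N, lam ^ (N - n))
          - ((1 - lam) / dt) * Istar|) atTop
      ≤ (1 - lam) * Vth / dt := by
  have hW : Tendsto (LIF.totalWeight lam) atTop (𝓝 (1 - lam)⁻¹) :=
    LIF.tendsto_totalWeight lam (abs_lt.mpr ⟨by linarith, hlam1⟩)
  have hWpos : ∀ᶠ N in atTop, 0 < LIF.totalWeight lam N :=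
    hW.eventually (lt_mem_nhds (inv_pos.mpr (sub_pos.mpr hlam1)))
  have hIerr : Tendsto (fun N => |LIF.weightedSum lam I N / LIF.totalWeight lam N - Istar|)
      atTop (𝓝 0) := by
    have h := (hI.sub_const Istar).abs
    rwa [sub_self, abs_zero] at h
  have hmajorant : Tendsto (fun N => (1 - lam) / dt * |LIF.weightedSum lam I N
      / LIF.totalWeight lam N - Istar| + Vth / (dt * LIF.totalWeight lam N))
      atTop (𝓝 ((1 - lam) * Vth / dt)) := by
    convert ((tendsto_const_nhds (x := (1 - lam) / dt)).mul hIerr).add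
      ((tendsto_const_nhds (x := Vth)).div (tendsto_const_nhds.mul hW)
        (by positivity : dt * (1 - lam)⁻¹ ≠ 0)) using 1
    · rfl
    · congr 1
      field_simp
      ring
  refine limsup_le_of_eventually_le_of_tendsto (fun _ => abs_nonneg _) ?_ hmajorant
  filter_upwards [hWpos] with N hN
  exact abs_rate_error_le hlam1.le hdt hN (LIF.potential_eq lam hV0 hV N) (hbound N).1 (hbound N).2

/-- For the discrete-time LIF neuron with threshold `Vth > 0`, leak
factor `lam ∈ (0,1)` and discretization step `dt > 0`: if `0 ≤ V N ≤ Vth` for all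
`N ≥ 0` and the weighted average input currents converge, `Î N → Istar`, then the
scaled weighted firing rates satisfy
`limsup_{N→∞} |â N − ((1 − lam)/dt) · Istar| ≤ (1 − lam) · Vth / dt`. -/
theorem lif_rate_limsup_bound (Vth lam dt : ℝ) (hVth : 0 < Vth)
    (hlam0 : 0 < lam) (hlam1 : lam < 1) (hdt : 0 < dt)
    (I V s : ℕ → ℝ)
    (hV0 : V 0 = 0)
    (hs : ∀ n : ℕ, s (n + 1) = if Vth ≤ lam * V n + (1 - lam) * I (n + 1) then 1 else 0)
    (hV : ∀ n : ℕ, V (n + 1) = (lam * V n + (1 - lam) * I (n + 1)) - Vth * s (n + 1))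
    (hbound : ∀ N : ℕ, 0 ≤ V N ∧ V N ≤ Vth)
    (Istar : ℝ)
    (hI : Tendsto (fun N : ℕ => (∑ n ∈ Finset.Icc 1 N, lam ^ (N - n) * I n)
            / (∑ n ∈ Finset.Icc 1 N, lam ^ (N - n))) atTop (nhds Istar)) :
    Filter.limsup (fun N : ℕ =>
        |Vth * (∑ n ∈ Finset.Icc 1 N, lam ^ (N - n) * s n)
            / (dt * ∑ n ∈ Finset.Icc 1 N, lam ^ (N - n))
          - ((1 - lam) / dt) * Istar|) atTop
      ≤ (1 - lam) * Vth / dt :=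
  lif_rate_limsup_bound_general Vth lam dt hlam0 hlam1 hdt I V s hV0 hV hbound Istar hI
end

section
/- (Quantitative single-layer form of Proposition 1) Suppose the input representation converges, â^in[N] → z ∈ ℝ^m as N → ∞, and the output membrane potentials stay bounded: 0 ≤ V[N]_j ≤ V_th for all N ≥ 0 and all j. Then for every output coordinate j, limsup_{N→∞} |â[N]_j − ((1−λ)/Δt)·(W·z)_j| ≤ (1−λ)·V_th/Δt. -/
/-!
Unrolling the reset recursion expresses the potential through the leaky sums
`E_N(x) = ∑_{n=1}^N λ^(N-n) x[n]`: `V[N] = (1-λ)(V_th^in/Δt) W E_N(s^in) - V_th E_N(s)`.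
Dividing by `Δt ∑_{n=1}^N λ^(N-n)` gives
`â[N] = ((1-λ)/Δt) W â^in[N] - V[N] / (Δt ∑ λ^(N-n))`,
so the output rate follows the transformed input rate up to a residual bounded by
`V_th / (Δt ∑ λ^(N-n))`, which tends to `(1-λ) V_th / Δt` because the weight sum tends to
`1/(1-λ)`.
-/

open Filter Topology Matrix

section ExpWeightedSum

variable {R E : Type*} [CommSemiring R]

def expWeightedSum [AddCommMonoid E] [Module R E] (lam : R) (F : ℕ → E) (N : ℕ) : E :=
  ∑ n ∈ Finset.Icc 1 N, lam ^ (N - n) • F n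

section Module

variable [AddCommMonoid E] [Module R E] (lam : R) (F : ℕ → E)

@[simp]
theorem expWeightedSum_zero : expWeightedSum lam F 0 = 0 := by
  simp [expWeightedSum]

theorem expWeightedSum_succ (N : ℕ) :
    expWeightedSum lam F (N + 1) = lam • expWeightedSum lam F N + F (N + 1) := by
  rw [expWeightedSum, Finset.sum_Icc_succ_top (by omega), Nat.sub_self, pow_zero, one_smul,
    expWeightedSum, Finset.smul_sum]
  congr 1
  refine Finset.sum_congr rfl fun n hn => ?_
  rw [Nat.sub_add_comm (Finset.mem_Icc.mp hn).2, pow_succ', mul_smul]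

theorem expWeightedSum_smul (c : R) (N : ℕ) :
    expWeightedSum lam (fun n => c • F n) N = c • expWeightedSum lam F N := by
  simp only [expWeightedSum, Finset.smul_sum, smul_comm c]

theorem eq_expWeightedSum_of_succ {V : ℕ → E} (h0 : V 0 = 0)
    (hV : ∀ n, V (n + 1) = lam • V n + F (n + 1)) : V = expWeightedSum lam F := by
  funext N
  induction N with
  | zero => simp [h0]
  | succ N ih => rw [hV, ih, expWeightedSum_succ]

end Module

theorem expWeightedSum_sub [AddCommGroup E] [Module R E] (lam : R) (F G : ℕ → E) (N : ℕ) :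
    expWeightedSum lam (F - G) N = expWeightedSum lam F N - expWeightedSum lam G N := by
  simp only [expWeightedSum, Pi.sub_apply, smul_sub, Finset.sum_sub_distrib]

theorem expWeightedSum_apply {ι : Type*} (lam : R) (F : ℕ → ι → R) (N : ℕ) (i : ι) :
    expWeightedSum lam F N i = ∑ n ∈ Finset.Icc 1 N, lam ^ (N - n) * F n i := by
  simp only [expWeightedSum, Finset.sum_apply, Pi.smul_apply, smul_eq_mul]

theorem expWeightedSum_mulVec {ι κ : Type*} [Fintype κ] (lam : R) (A : Matrix ι κ R)
    (F : ℕ → κ → R) (N : ℕ) :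
    expWeightedSum lam (fun n => A *ᵥ F n) N = A *ᵥ expWeightedSum lam F N := by
  simp only [expWeightedSum, Matrix.mulVec_sum, Matrix.mulVec_smul]

end ExpWeightedSum

theorem sum_Icc_one_sub_eq_sum_range {M : Type*} [AddCommMonoid M] (f : ℕ → M) (N : ℕ) :
    ∑ n ∈ Finset.Icc 1 N, f (N - n) = ∑ i ∈ Finset.range N, f i := by
  rw [← Finset.Ico_add_one_right_eq_Icc, Finset.sum_Ico_reflect _ _ le_rfl, Nat.sub_self,
    Nat.add_sub_cancel, Finset.range_eq_Ico]

theorem sum_Icc_pow_sub_pos {lam : ℝ} (hlam : 0 < lam) {N : ℕ} (hN : 1 ≤ N) :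
    0 < ∑ n ∈ Finset.Icc 1 N, lam ^ (N - n) := by
  rw [sum_Icc_one_sub_eq_sum_range (lam ^ ·)]
  exact Finset.sum_pos (fun i _ => pow_pos hlam i) (Finset.nonempty_range_iff.mpr (by omega))

theorem tendsto_sum_Icc_pow_sub {lam : ℝ} (hlam0 : 0 ≤ lam) (hlam1 : lam < 1) :
    Tendsto (fun N : ℕ => ∑ n ∈ Finset.Icc 1 N, lam ^ (N - n)) atTop (𝓝 (1 - lam)⁻¹) := by
  simpa only [sum_Icc_one_sub_eq_sum_range (lam ^ ·)] using
    (hasSum_geometric_of_lt_one hlam0 hlam1).tendsto_sum_nat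

theorem limsup_abs_sub_le_of_abs_sub_le {α : Type*} {l : Filter α} [l.NeBot]
    {x y b : α → ℝ} {L B : ℝ} (hy : Tendsto y l (𝓝 L)) (hb : Tendsto b l (𝓝 B))
    (hxy : ∀ᶠ a in l, |x a - y a| ≤ b a) :
    limsup (fun a => |x a - L|) l ≤ B := by
  have hdom : Tendsto (fun a => |y a - L| + b a) l (𝓝 B) := by
    simpa using ((hy.sub_const L).abs).add hb
  calc limsup (fun a => |x a - L|) l
      ≤ limsup (fun a => |y a - L| + b a) l := by
        refine limsup_le_limsup ?_ (isCoboundedUnder_le_of_le l fun a => abs_nonneg _)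
          hdom.isBoundedUnder_le
        filter_upwards [hxy] with a ha
        calc |x a - L| ≤ |x a - y a| + |y a - L| := abs_sub_le _ _ _
          _ ≤ |y a - L| + b a := by linarith
    _ = B := hdom.limsup_eq

section LIFLayer

variable {ι κ : Type*} [Fintype κ] (W : Matrix ι κ ℝ) (Vth Vthin lam dt : ℝ)
  (sin : ℕ → κ → ℝ) (V s : ℕ → ι → ℝ)

theorem lif_potential_eq (hV0 : ∀ j, V 0 j = 0)
    (hV : ∀ n j, V (n + 1) j
      = (lam * V n j + (1 - lam) * ((Vthin / dt) * (W *ᵥ sin (n + 1)) j)) - Vth * s (n + 1) j)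
    (N : ℕ) :
    V N = ((1 - lam) * (Vthin / dt)) • W *ᵥ expWeightedSum lam sin N
      - Vth • expWeightedSum lam s N := by
  set F : ℕ → ι → ℝ :=
    (fun n => ((1 - lam) * (Vthin / dt)) • W *ᵥ sin n) - fun n => Vth • s n
  have hrec : ∀ n, V (n + 1) = lam • V n + F (n + 1) := fun n => by
    ext j
    rw [hV]
    simp only [F, Pi.sub_apply, Pi.add_apply, Pi.smul_apply, smul_eq_mul]
    ring
  rw [eq_expWeightedSum_of_succ lam F (funext hV0) hrec, expWeightedSum_sub, expWeightedSum_smul,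
    expWeightedSum_smul, expWeightedSum_mulVec]

theorem lif_rate_sub_eq (hV0 : ∀ j, V 0 j = 0)
    (hV : ∀ n j, V (n + 1) j
      = (lam * V n j + (1 - lam) * ((Vthin / dt) * (W *ᵥ sin (n + 1)) j)) - Vth * s (n + 1) j)
    (hdt : dt ≠ 0) {N : ℕ} (hS : ∑ n ∈ Finset.Icc 1 N, lam ^ (N - n) ≠ 0) (j : ι) :
    Vth * (∑ n ∈ Finset.Icc 1 N, lam ^ (N - n) * s n j)
          / (dt * ∑ n ∈ Finset.Icc 1 N, lam ^ (N - n))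
        - (1 - lam) / dt * (W *ᵥ fun k =>
            Vthin * (∑ n ∈ Finset.Icc 1 N, lam ^ (N - n) * sin n k)
              / (dt * ∑ n ∈ Finset.Icc 1 N, lam ^ (N - n))) j
      = -(V N j / (dt * ∑ n ∈ Finset.Icc 1 N, lam ^ (N - n))) := by
  set S := ∑ n ∈ Finset.Icc 1 N, lam ^ (N - n)
  have hin : (fun k => Vthin * (∑ n ∈ Finset.Icc 1 N, lam ^ (N - n) * sin n k) / (dt * S))
      = (Vthin / (dt * S)) • expWeightedSum lam sin N := by
    ext k
    rw [Pi.smul_apply, expWeightedSum_apply, smul_eq_mul]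
    ring
  rw [hin, mulVec_smul, ← expWeightedSum_apply,
    lif_potential_eq W Vth Vthin lam dt sin V s hV0 hV]
  simp only [Pi.sub_apply, Pi.smul_apply, smul_eq_mul]
  field_simp
  ring

end LIFLayer

theorem lif_layer_rate_limsup_bound_general (d m : ℕ) (W : Matrix (Fin d) (Fin m) ℝ)
    (Vth Vthin lam dt : ℝ)
    (hlam0 : 0 < lam) (hlam1 : lam < 1) (hdt : 0 < dt)
    (sin : ℕ → Fin m → ℝ)
    (V s : ℕ → Fin d → ℝ)
    (hV0 : ∀ j, V 0 j = 0)
    (hV : ∀ n : ℕ, ∀ j, V (n + 1) j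
            = (lam * V n j + (1 - lam) * ((Vthin / dt) * W.mulVec (sin (n + 1)) j))
                - Vth * s (n + 1) j)
    (z : Fin m → ℝ)
    (hin : ∀ k, Tendsto (fun N : ℕ =>
            Vthin * (∑ n ∈ Finset.Icc 1 N, lam ^ (N - n) * sin n k)
              / (dt * ∑ n ∈ Finset.Icc 1 N, lam ^ (N - n))) atTop (nhds (z k)))
    (hbound : ∀ N : ℕ, ∀ j, 0 ≤ V N j ∧ V N j ≤ Vth) :
    ∀ j, Filter.limsup (fun N : ℕ =>
        |Vth * (∑ n ∈ Finset.Icc 1 N, lam ^ (N - n) * s n j)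
            / (dt * ∑ n ∈ Finset.Icc 1 N, lam ^ (N - n))
          - ((1 - lam) / dt) * W.mulVec z j|) atTop
      ≤ (1 - lam) * Vth / dt := by
  intro j
  have hS := tendsto_sum_Icc_pow_sub hlam0.le hlam1
  have hWj : Continuous fun v : Fin m → ℝ => (W *ᵥ v) j :=
    (continuous_apply j).comp (continuous_const.matrix_mulVec continuous_id)
  have hWin := (hWj.tendsto z).comp (tendsto_pi_nhds.2 hin)
  have hb : Tendsto (fun N : ℕ => Vth / (dt * ∑ n ∈ Finset.Icc 1 N, lam ^ (N - n))) atTop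
      (𝓝 (Vth / (dt * (1 - lam)⁻¹))) :=
    tendsto_const_nhds.div (hS.const_mul dt)
      (mul_ne_zero hdt.ne' (inv_ne_zero (sub_ne_zero.2 hlam1.ne')))
  rw [show (1 - lam) * Vth / dt = Vth / (dt * (1 - lam)⁻¹) by field_simp]
  refine limsup_abs_sub_le_of_abs_sub_le (hWin.const_mul ((1 - lam) / dt)) hb ?_
  filter_upwards [eventually_ge_atTop 1] with N hN
  have hSN := sum_Icc_pow_sub_pos hlam0 hN
  have hD := mul_pos hdt hSN
  rw [Function.comp_apply, lif_rate_sub_eq W Vth Vthin lam dt sin V s hV0 hV hdt.ne' hSN.ne',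
    abs_neg, abs_of_nonneg (div_nonneg (hbound N j).1 hD.le)]
  exact div_le_div_of_nonneg_right (hbound N j).2 hD.le

/-- **quantitative single-layer form of Proposition 1.** One layer of
`d` LIF neurons with weight matrix `W : ℝ^{d×m}`, output threshold `Vth > 0`, input
threshold scale `Vthin > 0`, leak factor `lam ∈ (0,1)`, discretization step `dt > 0`,
driven by input spike trains `sin : ℕ → {0,1}^m`. If the input representation
converges, `âin N → z`, and the output membrane potentials stay bounded,
`0 ≤ V N j ≤ Vth` for all `N` and `j`, then for every output coordinate `j`,
`limsup_{N→∞} |â N j − ((1 − lam)/dt) · (W·z)_j| ≤ (1 − lam) · Vth / dt`. -/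
theorem lif_layer_rate_limsup_bound (d m : ℕ) (W : Matrix (Fin d) (Fin m) ℝ)
    (Vth Vthin lam dt : ℝ) (hVth : 0 < Vth) (hVthin : 0 < Vthin)
    (hlam0 : 0 < lam) (hlam1 : lam < 1) (hdt : 0 < dt)
    (sin : ℕ → Fin m → ℝ)
    (hsin : ∀ n : ℕ, 1 ≤ n → ∀ k, sin n k = 0 ∨ sin n k = 1)
    (V s : ℕ → Fin d → ℝ)
    (hV0 : ∀ j, V 0 j = 0)
    (hs : ∀ n : ℕ, ∀ j, s (n + 1) j
            = if Vth ≤ lam * V n j + (1 - lam) * ((Vthin / dt) * W.mulVec (sin (n + 1)) j)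
              then 1 else 0)
    (hV : ∀ n : ℕ, ∀ j, V (n + 1) j
            = (lam * V n j + (1 - lam) * ((Vthin / dt) * W.mulVec (sin (n + 1)) j))
                - Vth * s (n + 1) j)
    (z : Fin m → ℝ)
    (hin : ∀ k, Tendsto (fun N : ℕ =>
            Vthin * (∑ n ∈ Finset.Icc 1 N, lam ^ (N - n) * sin n k)
              / (dt * ∑ n ∈ Finset.Icc 1 N, lam ^ (N - n))) atTop (nhds (z k)))
    (hbound : ∀ N : ℕ, ∀ j, 0 ≤ V N j ∧ V N j ≤ Vth) :
    ∀ j, Filter.limsup (fun N : ℕ =>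
        |Vth * (∑ n ∈ Finset.Icc 1 N, lam ^ (N - n) * s n j)
            / (dt * ∑ n ∈ Finset.Icc 1 N, lam ^ (N - n))
          - ((1 - lam) / dt) * W.mulVec z j|) atTop
      ≤ (1 - lam) * Vth / dt :=
  lif_layer_rate_limsup_bound_general d m W Vth Vthin lam dt hlam0 hlam1 hdt sin V s hV0 hV z hin
    hbound
end

section
/- If the input current is constant, I[n] = I* for all n ≥ 1, then for every N ≥ 1 the spike count of the IF neuron equals ∑_{n=1}^N s[n] = clamp(⌊N·I*/V_th⌋, 0, N), where clamp(x,a,b) := max(a, min(x,b)) and ⌊·⌋ is the floor function; equivalently, the scaled firing rate is a[N] = (V_th/N)·clamp(⌊N·I*/V_th⌋, 0, N). -/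
/-!
Write `x = I*/V_th` and `c n` for the number of spikes up to step `n`. Since every spike
subtracts `V_th`, the potential is `V n = n I* - V_th c n`, so the neuron fires at step `n + 1`
exactly when `c n + 1 ≤ (n + 1) x`. The clamped floor `clamp(⌊n x⌋, 0, n) = ⌊n clamp(x, 0, 1)⌋`
obeys the same greedy recursion, because `n ↦ ⌊n y⌋` grows by `0` or `1` per step for `y ∈ [0, 1]`.
-/

open Finset

noncomputable def clampedFloor (x : ℝ) (n : ℕ) : ℤ := max 0 (min ⌊(n : ℝ) * x⌋ n)

lemma clampedFloor_eq_floor_mul_clamp (x : ℝ) (n : ℕ) :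
    clampedFloor x n = ⌊(n : ℝ) * max 0 (min x 1)⌋ := by
  have hn : (0 : ℝ) ≤ n := n.cast_nonneg
  rw [mul_max_of_nonneg _ _ hn, mul_min_of_nonneg _ _ hn, mul_zero, mul_one,
    Int.floor_mono.map_max, Int.floor_mono.map_min, Int.floor_zero, Int.floor_natCast,
    clampedFloor]

lemma clampedFloor_le_succ (x : ℝ) (n : ℕ) :
    clampedFloor x n ≤ clampedFloor x (n + 1) ∧ clampedFloor x (n + 1) ≤ clampedFloor x n + 1 := by
  set y := max 0 (min x 1)
  have hy0 : 0 ≤ y := le_max_left _ _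
  have hy1 : y ≤ 1 := max_le zero_le_one (min_le_right _ _)
  simp only [clampedFloor_eq_floor_mul_clamp, Nat.cast_succ]
  constructor
  · exact Int.floor_mono (by nlinarith)
  · rw [← Int.floor_add_one]
    exact Int.floor_mono (by nlinarith)

lemma clampedFloor_succ (x : ℝ) (n : ℕ) :
    clampedFloor x (n + 1) =
      if (clampedFloor x n + 1 : ℝ) ≤ (n + 1) * x then clampedFloor x n + 1
      else clampedFloor x n := by
  have hc0 : 0 ≤ clampedFloor x n := le_max_left _ _
  have hcn : clampedFloor x n ≤ n := max_le n.cast_nonneg (min_le_right _ _)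
  have hstep : clampedFloor x n + 1 ≤ clampedFloor x (n + 1) ↔
      (clampedFloor x n + 1 : ℝ) ≤ (n + 1) * x := by
    rw [show clampedFloor x (n + 1) = max 0 (min ⌊((n + 1 : ℕ) : ℝ) * x⌋ (n + 1 : ℕ)) from rfl,
      le_max_iff, le_min_iff, Int.le_floor]
    push_cast
    constructor
    · rintro (h | ⟨h, -⟩)
      · omega
      · exact h
    · intro h
      exact Or.inr ⟨h, by omega⟩
  obtain ⟨hle_succ, hsucc_le⟩ := clampedFloor_le_succ x n
  split_ifs with h
  · exact le_antisymm hsucc_le (hstep.mpr h)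
  · exact le_antisymm (by rw [← hstep] at h; omega) hle_succ

section IFNeuron

variable {Vth I : ℝ} {V s : ℕ → ℝ}

lemma if_potential_eq (hV0 : V 0 = 0) (hV : ∀ n : ℕ, V (n + 1) = (V n + I) - Vth * s (n + 1))
    (n : ℕ) : V n = n * I - Vth * ∑ k ∈ Icc 1 n, s k := by
  induction n with
  | zero => simp [hV0]
  | succ n ih =>
    rw [hV, ih, sum_Icc_succ_top (Nat.le_add_left 1 n)]
    push_cast
    ring

lemma if_spike_count_eq_clampedFloor (hVth : 0 < Vth) (hV0 : V 0 = 0)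
    (hs : ∀ n : ℕ, s (n + 1) = if Vth ≤ V n + I then 1 else 0)
    (hV : ∀ n : ℕ, V (n + 1) = (V n + I) - Vth * s (n + 1)) (n : ℕ) :
    ∑ k ∈ Icc 1 n, s k = clampedFloor (I / Vth) n := by
  induction n with
  | zero => simp [clampedFloor]
  | succ n ih =>
    have hfire : Vth ≤ V n + I ↔ (clampedFloor (I / Vth) n + 1 : ℝ) ≤ (n + 1) * (I / Vth) := by
      rw [if_potential_eq hV0 hV, ih, ← mul_div_assoc, le_div_iff₀ hVth]
      constructor <;> intro h <;> linarith
    rw [sum_Icc_succ_top (Nat.le_add_left 1 n), ih, hs, clampedFloor_succ, if_congr hfire rfl rfl]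
    split_ifs <;> push_cast <;> ring

end IFNeuron

/-- For the discrete-time IF neuron with threshold `Vth > 0` and
constant input current `Istar`, for every `N ≥ 1` the spike count equals
`∑_{n=1}^N s n = clamp(⌊N·Istar/Vth⌋, 0, N)` where `clamp x a b = max a (min x b)`;
equivalently, the scaled firing rate is
`a N = (Vth/N) · clamp(⌊N·Istar/Vth⌋, 0, N)`. -/
theorem if_constant_input_spike_count (Vth Istar : ℝ) (hVth : 0 < Vth)
    (V s : ℕ → ℝ)
    (hV0 : V 0 = 0)
    (hs : ∀ n : ℕ, s (n + 1) = if Vth ≤ V n + Istar then 1 else 0)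
    (hV : ∀ n : ℕ, V (n + 1) = (V n + Istar) - Vth * s (n + 1)) :
    ∀ N : ℕ, 1 ≤ N →
      (∑ n ∈ Finset.Icc 1 N, s n)
          = ((max 0 (min ⌊(N : ℝ) * Istar / Vth⌋ (N : ℤ)) : ℤ) : ℝ) ∧
      (Vth / N) * ∑ n ∈ Finset.Icc 1 N, s n
          = (Vth / N) * ((max 0 (min ⌊(N : ℝ) * Istar / Vth⌋ (N : ℤ)) : ℤ) : ℝ) := by
  intro N _
  have hcount : ∑ n ∈ Icc 1 N, s n = ((max 0 (min ⌊(N : ℝ) * Istar / Vth⌋ (N : ℤ)) : ℤ) : ℝ) := by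
    rw [if_spike_count_eq_clampedFloor hVth hV0 hs hV, clampedFloor, mul_div_assoc]
  exact ⟨hcount, by rw [hcount]⟩
end

section
/- If the input current is constant with 0 ≤ I* ≤ V_th, then for every N ≥ 1 the quantization error of the IF neuron's scaled firing rate satisfies |a[N] − I*| < V_th/N. -/
/-! After `n` steps the potential equals the input received minus the charge removed by
spikes, `V n = n I* - V_th ∑ s`, so `a[N] - I* = -V N / N`. With `0 ≤ I* ≤ V_th` the
reset keeps the potential in `[0, V_th)`, which gives the bound. -/

open Finset

namespace IFNeuron

variable {θ I : ℝ} {V s : ℕ → ℝ}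

theorem potential_mem_Ico (hI0 : 0 ≤ I) (hI1 : I ≤ θ) (h₀ : V 0 ∈ Set.Ico 0 θ)
    (hs : ∀ n, s (n + 1) = if θ ≤ V n + I then 1 else 0)
    (hV : ∀ n, V (n + 1) = (V n + I) - θ * s (n + 1)) (n : ℕ) : V n ∈ Set.Ico 0 θ := by
  induction n with
  | zero => exact h₀
  | succ k ih =>
    obtain ⟨hlo, hhi⟩ := ih
    rw [hV k, hs k]
    split_ifs <;> constructor <;> linarith

theorem potential_eq_sub_sum (hV : ∀ n, V (n + 1) = (V n + I) - θ * s (n + 1)) (N : ℕ) :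
    V N = V 0 + N * I - θ * ∑ n ∈ Icc 1 N, s n := by
  induction N with
  | zero => simp
  | succ k ih =>
    rw [sum_Icc_succ_top (by omega), hV k, ih]
    push_cast
    ring

end IFNeuron

/-- For the discrete-time IF neuron with threshold `Vth > 0` and
constant input current `Istar` with `0 ≤ Istar ≤ Vth`, for every `N ≥ 1` the
quantization error of the scaled firing rate satisfies `|a N − Istar| < Vth / N`. -/
theorem if_constant_input_quantization_error (Vth Istar : ℝ) (hVth : 0 < Vth)
    (hI0 : 0 ≤ Istar) (hI1 : Istar ≤ Vth)
    (V s : ℕ → ℝ)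
    (hV0 : V 0 = 0)
    (hs : ∀ n : ℕ, s (n + 1) = if Vth ≤ V n + Istar then 1 else 0)
    (hV : ∀ n : ℕ, V (n + 1) = (V n + Istar) - Vth * s (n + 1)) :
    ∀ N : ℕ, 1 ≤ N →
      |(Vth / N) * (∑ n ∈ Finset.Icc 1 N, s n) - Istar| < Vth / N := by
  intro N hN
  have hNpos : (0 : ℝ) < N := by exact_mod_cast hN
  obtain ⟨hlo, hhi⟩ := IFNeuron.potential_mem_Ico hI0 hI1 (by simp [hV0, hVth]) hs hV N
  have herror : (Vth / N) * (∑ n ∈ Icc 1 N, s n) - Istar = -V N / N := by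
    rw [IFNeuron.potential_eq_sub_sum hV N, hV0]
    field_simp
    ring
  rw [herror, abs_div, abs_neg, abs_of_nonneg hlo, abs_of_pos hNpos]
  exact div_lt_div_of_pos_right hhi hNpos
end

section
/- With the modified firing rule at α = 1/2, if the input current is constant with 0 ≤ I* ≤ V_th, then for every N ≥ 1 the quantization error satisfies |a[N] − I*| ≤ V_th/(2N); thus the maximum absolute quantization error is half of the bound V_th/N for the standard firing rule. -/
/-!
Reset by subtraction makes the spike count telescope: `θ · ∑ s = N·I − V N`, so the error of
the scaled rate is exactly `−V N / N`. With the firing threshold at `α·θ` and `0 ≤ I ≤ θ`, the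
membrane potential never leaves `[(α − 1)θ, αθ]`, which for `α = 1/2` is `[−θ/2, θ/2]`.
-/

open Finset

section IntegrateAndFire

variable {θ α I : ℝ} {V s : ℕ → ℝ}

theorem mul_sum_Icc_eq_of_reset (hV : ∀ n, V (n + 1) = V n + I - θ * s (n + 1)) (N : ℕ) :
    θ * ∑ n ∈ Icc 1 N, s n = N * I + V 0 - V N := by
  induction N with
  | zero => simp
  | succ k ih =>
    rw [sum_Icc_succ_top (by omega), mul_add, ih, hV k]
    push_cast
    ring

theorem rate_sub_eq_of_reset (hV : ∀ n, V (n + 1) = V n + I - θ * s (n + 1)) {N : ℕ}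
    (hN : N ≠ 0) : θ / N * ∑ n ∈ Icc 1 N, s n - I = (V 0 - V N) / N := by
  have hN' : (N : ℝ) ≠ 0 := Nat.cast_ne_zero.2 hN
  rw [div_mul_eq_mul_div, mul_sum_Icc_eq_of_reset hV N]
  field_simp
  ring

theorem reset_step_mem_Icc (hI0 : 0 ≤ I) (hIθ : I ≤ θ) {v : ℝ}
    (hv : v ∈ Set.Icc ((α - 1) * θ) (α * θ)) :
    v + I - θ * (if α * θ ≤ v + I then 1 else 0) ∈ Set.Icc ((α - 1) * θ) (α * θ) := by
  obtain ⟨hlo, hhi⟩ := hv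
  split_ifs with hfire <;> constructor <;> linarith

theorem potential_mem_Icc (hI0 : 0 ≤ I) (hIθ : I ≤ θ)
    (h0 : V 0 ∈ Set.Icc ((α - 1) * θ) (α * θ))
    (hs : ∀ n, s (n + 1) = if α * θ ≤ V n + I then 1 else 0)
    (hV : ∀ n, V (n + 1) = V n + I - θ * s (n + 1)) (n : ℕ) :
    V n ∈ Set.Icc ((α - 1) * θ) (α * θ) := by
  induction n with
  | zero => exact h0
  | succ k ih =>
    rw [hV k, hs k]
    exact reset_step_mem_Icc hI0 hIθ ih

end IntegrateAndFire

theorem if_modified_constant_input_quantization_error_general (Vth Istar : ℝ)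
    (hI0 : 0 ≤ Istar) (hI1 : Istar ≤ Vth)
    (V s : ℕ → ℝ)
    (hV0 : V 0 = 0)
    (hs : ∀ n : ℕ, s (n + 1) = if (1 / 2 : ℝ) * Vth ≤ V n + Istar then 1 else 0)
    (hV : ∀ n : ℕ, V (n + 1) = (V n + Istar) - Vth * s (n + 1)) :
    ∀ N : ℕ, 1 ≤ N →
      |(Vth / N) * (∑ n ∈ Finset.Icc 1 N, s n) - Istar| ≤ Vth / (2 * N) := by
  intro N hN
  have hVth : 0 ≤ Vth := hI0.trans hI1
  have h0 : V 0 ∈ Set.Icc ((1 / 2 - 1) * Vth) (1 / 2 * Vth) := by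
    rw [hV0]
    constructor <;> linarith
  obtain ⟨hlo, hhi⟩ := potential_mem_Icc hI0 hI1 h0 hs hV N
  have hNpos : (0 : ℝ) < N := by exact_mod_cast hN
  calc |Vth / N * ∑ n ∈ Icc 1 N, s n - Istar| = |V N| / N := by
        rw [rate_sub_eq_of_reset hV (by omega), hV0, zero_sub, neg_div, abs_neg, abs_div,
          Nat.abs_cast]
    _ ≤ Vth / 2 / N := by gcongr; exact abs_le.2 ⟨by linarith, by linarith⟩
    _ = Vth / (2 * N) := div_div _ _ _

/-- For the discrete-time IF neuron with threshold `Vth > 0`,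
constant input current `Istar` with `0 ≤ Istar ≤ Vth`, and the modified firing rule at
`α = 1/2` (fire when `U n ≥ α·Vth`, reset by subtracting `Vth`), for every `N ≥ 1`
the quantization error satisfies `|a N − Istar| ≤ Vth / (2N)` — half of the bound
`Vth / N` of the standard firing rule. -/
theorem if_modified_constant_input_quantization_error (Vth Istar : ℝ) (hVth : 0 < Vth)
    (hI0 : 0 ≤ Istar) (hI1 : Istar ≤ Vth)
    (V s : ℕ → ℝ)
    (hV0 : V 0 = 0)
    (hs : ∀ n : ℕ, s (n + 1) = if (1 / 2 : ℝ) * Vth ≤ V n + Istar then 1 else 0)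
    (hV : ∀ n : ℕ, V (n + 1) = (V n + Istar) - Vth * s (n + 1)) :
    ∀ N : ℕ, 1 ≤ N →
      |(Vth / N) * (∑ n ∈ Finset.Icc 1 N, s n) - Istar| ≤ Vth / (2 * N) :=
  if_modified_constant_input_quantization_error_general Vth Istar hI0 hI1 V s hV0 hs hV
end
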